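/- If f : S → S' is a zigzag morphism between LMPs and s ∼ₛ t in S, then f(s) ∼ₛ f(t) in S'. (The image relation f[R] = {(f(x),f(y)) | x R y} of a state bisimulation R is a state bisimulation.) -/

import Mathlib

open MeasureTheory

/-- A labelled Markov process: a family of Markov (sub-probability) kernels indexed by labels. -/
structure LMP (L : Type*) (S : Type*) [MeasurableSpace S] where
  τ : L → S → Measure S
  prob : ∀ a s, τ a s Set.univ ≤ 1
  meas : ∀ a (B : Set S), MeasurableSet B → Measurable fun s => τ a s B

/-- A set `X` is `R`-closed if it contains every point related (in either direction)
to one of its points. -/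
def RClosed {S : Type*} (R : S → S → Prop) (X : Set S) : Prop :=
  ∀ x ∈ X, ∀ s, R x s ∨ R s x → s ∈ X

/-- A pair `(A, A')` is an `R`-closed pair. -/
def RClosedPair {S S' : Type*} (R : S → S' → Prop) (A : Set S) (A' : Set S') : Prop :=
  ∀ s s', R s s' → (s ∈ A ↔ s' ∈ A')

section LMPdefs

variable {L S S' : Type*} [MeasurableSpace S] [MeasurableSpace S']

/-- Internal state bisimulation on an LMP. -/
def IsStateBisim (M : LMP L S) (R : S → S → Prop) : Prop :=
  ∀ s t, R s t → ∀ C : Set S, MeasurableSet C → RClosed R C →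
    ∀ a, M.τ a s C = M.τ a t C

/-- State bisimilarity: two states are related by some state bisimulation. -/
def StateBisimilar (M : LMP L S) (s t : S) : Prop :=
  ∃ R, IsStateBisim M R ∧ R s t

/-- Zigzag morphism between LMPs. -/
def IsZigzag (M : LMP L S) (M' : LMP L S') (f : S → S') : Prop :=
  Measurable f ∧ ∀ a s (B : Set S'), MeasurableSet B → M.τ a s (f ⁻¹' B) = M'.τ a (f s) B

/-- External (×-)bisimulation between two LMPs. -/
def IsExtBisim (M : LMP L S) (M' : LMP L S') (R : S → S' → Prop) : Prop :=
  ∀ s s', R s s' → ∀ (A : Set S) (A' : Set S'), MeasurableSet A → MeasurableSet A' →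
    RClosedPair R A A' → ∀ a, M.τ a s A = M'.τ a s' A'

/-- External bisimilarity. -/
def ExtBisimilar (M : LMP L S) (M' : LMP L S') (s : S) (s' : S') : Prop :=
  ∃ R, IsExtBisim M M' R ∧ R s s'

/-- The copy of `A ⊕ A'` inside the disjoint sum. -/
def sumSet (A : Set S) (A' : Set S') : Set (S ⊕ S') := Sum.inl '' A ∪ Sum.inr '' A'

/-- The direct sum of two LMPs. -/
noncomputable def LMP.sum (M : LMP L S) (M' : LMP L S') : LMP L (S ⊕ S') where
  τ a := Sum.elim (fun s => (M.τ a s).map Sum.inl) (fun s' => (M'.τ a s').map Sum.inr)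
  prob a x := by
    cases x with
    | inl s =>
        simpa [Measure.map_apply measurable_inl MeasurableSet.univ] using M.prob a s
    | inr s' =>
        simpa [Measure.map_apply measurable_inr MeasurableSet.univ] using M'.prob a s'
  meas a B hB := by
    have h : (fun x => Sum.elim (fun s => (M.τ a s).map Sum.inl)
          (fun s' => (M'.τ a s').map Sum.inr) x B)
        = Sum.elim (fun s => M.τ a s (Sum.inl ⁻¹' B))
            (fun s' => M'.τ a s' (Sum.inr ⁻¹' B)) := by
      funext x
      cases x with
      | inl s => simp [Measure.map_apply measurable_inl hB]
      | inr s' => simp [Measure.map_apply measurable_inr hB]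
    rw [h]
    exact Measurable.sumElim (M.meas a _ (hB.preimage measurable_inl))
      (M'.meas a _ (hB.preimage measurable_inr))

end LMPdefs

theorem RClosed.preimage {S S' : Type*} {R : S → S → Prop} {R' : S' → S' → Prop} {f : S → S'}
    (hRR' : ∀ x y, R x y → R' (f x) (f y)) {C : Set S'} (hC : RClosed R' C) :
    RClosed R (f ⁻¹' C) := by
  rintro u hu v (huv | hvu)
  · exact hC (f u) hu (f v) (Or.inl (hRR' u v huv))
  · exact hC (f u) hu (f v) (Or.inr (hRR' v u hvu))

section Zigzag

variable {L S S' : Type*} [MeasurableSpace S] [MeasurableSpace S']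
  {M : LMP L S} {M' : LMP L S'} {f : S → S'}

theorem IsStateBisim.image (hf : IsZigzag M M' f) {R : S → S → Prop} (hR : IsStateBisim M R) :
    IsStateBisim M' (fun x' y' => ∃ x y, R x y ∧ x' = f x ∧ y' = f y) := by
  rintro _ _ ⟨x, y, hxy, rfl, rfl⟩ C hC hCclosed a
  have hpre : RClosed R (f ⁻¹' C) := hCclosed.preimage fun u v huv => ⟨u, v, huv, rfl, rfl⟩
  calc M'.τ a (f x) C = M.τ a x (f ⁻¹' C) := (hf.2 a x C hC).symm
    _ = M.τ a y (f ⁻¹' C) := hR x y hxy _ (hC.preimage hf.1) hpre a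
    _ = M'.τ a (f y) C := hf.2 a y C hC

theorem StateBisimilar.image (hf : IsZigzag M M' f) {s t : S} (hst : StateBisimilar M s t) :
    StateBisimilar M' (f s) (f t) :=
  let ⟨R, hR, hRst⟩ := hst
  ⟨_, hR.image hf, s, t, hRst, rfl, rfl⟩

end Zigzag

/-- Zigzag morphisms preserve state bisimilarity; the image of a state bisimulation
is a state bisimulation. -/
theorem stmt4 {L S S' : Type*} [MeasurableSpace S] [MeasurableSpace S']
    (M : LMP L S) (M' : LMP L S') (f : S → S') (hf : IsZigzag M M' f) :
    (∀ R : S → S → Prop, IsStateBisim M R →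
      IsStateBisim M' (fun x' y' => ∃ x y, R x y ∧ x' = f x ∧ y' = f y)) ∧
    (∀ s t, StateBisimilar M s t → StateBisimilar M' (f s) (f t)) :=
  ⟨fun _ hR => hR.image hf, fun _ _ hst => hst.image hf⟩
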